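/- arXiv:1304.4169 — 6 statements merged into one kernel-verified Lean document; each statement's English description precedes it below -/
import Mathlib

section
/- Let Γ be a backward inhomogeneous Y-semigroup with generator A. Assume Y₁ ⊆ D(A), that Γ is Y₁-super strongly s-continuous (i.e. Γ(s,t)Y₁ ⊆ Y₁ for all (s,t) ∈ Δ_J and for every f ∈ Y₁ and t ∈ J the map u ↦ Γ(u,t)f is continuous from {u ∈ J : u ≤ t} to Y₁ in the Y₁-norm), and that Γ is Y₁-strongly t-continuous (i.e. for every f ∈ Y₁ and s ∈ J the map u ↦ Γ(s,u)f is continuous from {u ∈ J : u ≥ s} to Y in the Y-norm). Then for all (s,t) ∈ Δ_J and all f ∈ Y₁, the map u ↦ Γ(u,t)f is differentiable in s with ∂/∂s Γ(s,t)f = −A(s)Γ(s,t)f (derivative and limit in the Y-norm). -/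
/-!
For `u < s` the propagator law gives `Γ(u,t)f = Γ(u,s)Γ(s,t)f`, so the left difference quotient
at `s` is the backward generator quotient applied to `Γ(s,t)f ∈ Y₁`. For `u = s + h > s` it gives
`Γ(s,t)f = Γ(s,s+h)Γ(s+h,t)f`, so the right quotient is `-Dₕ(Γ(s+h,t)f)` with
`Dₕ = h⁻¹(Γ(s,s+h) - I) : Y₁ → Y`. The operators `Dₕ` converge strongly to `A(s)` as `h ↓ 0` and
depend strongly continuously on `h > 0`, hence are uniformly bounded by Banach–Steinhaus; since
`Γ(s+h,t)f → Γ(s,t)f` in `Y₁`, this gives `Dₕ(Γ(s+h,t)f) → A(s)Γ(s,t)f`.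
-/

open Filter Topology Set

section Calculus

variable {E : Type*} [NormedAddCommGroup E] [NormedSpace ℝ E] {f : ℝ → E} {K : Set ℝ} {x : ℝ}
  {a : E}

theorem hasDerivWithinAt_inter_Ici_of_tendsto
    (h : Tendsto (fun h => h⁻¹ • (f (x + h) - f x)) (𝓝[{h | 0 < h ∧ x + h ∈ K}] 0) (𝓝 a)) :
    HasDerivWithinAt f a (K ∩ Ici x) x := by
  rw [hasDerivWithinAt_iff_tendsto_slope, inter_sdiff_assoc, Ici_sdiff_left]
  have hshift : Tendsto (fun u => u - x) (𝓝[K ∩ Ioi x] x) (𝓝[{h | 0 < h ∧ x + h ∈ K}] 0) := by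
    refine tendsto_nhdsWithin_of_tendsto_nhds_of_eventually_within _ ?_ ?_
    · simpa using ((continuous_sub_right x).tendsto x).mono_left nhdsWithin_le_nhds
    · filter_upwards [self_mem_nhdsWithin] with u hu
      exact ⟨sub_pos.mpr hu.2, by simpa using hu.1⟩
  refine (h.comp hshift).congr fun u => ?_
  simp [slope_def_module]

theorem hasDerivWithinAt_inter_Iic_of_tendsto
    (h : Tendsto (fun h => h⁻¹ • (f (x - h) - f x)) (𝓝[{h | 0 < h ∧ x - h ∈ K}] 0) (𝓝 a)) :
    HasDerivWithinAt f (-a) (K ∩ Iic x) x := by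
  rw [hasDerivWithinAt_iff_tendsto_slope, inter_sdiff_assoc, Iic_sdiff_right]
  have hshift : Tendsto (fun u => x - u) (𝓝[K ∩ Iio x] x) (𝓝[{h | 0 < h ∧ x - h ∈ K}] 0) := by
    refine tendsto_nhdsWithin_of_tendsto_nhds_of_eventually_within _ ?_ ?_
    · simpa using ((continuous_sub_left x).tendsto x).mono_left nhdsWithin_le_nhds
    · filter_upwards [self_mem_nhdsWithin] with u hu
      exact ⟨sub_pos.mpr hu.2, by simpa using hu.1⟩
  refine (h.comp hshift).neg.congr fun u => ?_
  rw [slope_def_module, ← neg_sub x u, inv_neg, neg_smul, Function.comp_apply, sub_sub_cancel]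

end Calculus

theorem exists_norm_le_of_continuousOn_Ioc_of_tendsto {F : Type*} [NormedAddCommGroup F]
    {f : ℝ → F} {a b : ℝ} {L : F} (hf : ContinuousOn f (Ioc a b))
    (hL : Tendsto f (𝓝[Ioc a b] a) (𝓝 L)) : ∃ C, ∀ x ∈ Ioc a b, ‖f x‖ ≤ C := by
  have hcont : ContinuousOn (Function.update f a L) (Icc a b) := by
    intro x hx
    rcases eq_or_ne x a with rfl | hxa
    · rwa [continuousWithinAt_update_same, Icc_sdiff_left]
    · have hx' : x ∈ Ioc a b := ⟨lt_of_le_of_ne hx.1 hxa.symm, hx.2⟩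
      rw [continuousWithinAt_update_of_ne hxa]
      refine (hf x hx').mono_of_mem_nhdsWithin ?_
      exact mem_nhdsWithin.2 ⟨Ioi a, isOpen_Ioi, hx'.1, fun y hy => ⟨hy.1, hy.2.2⟩⟩
  obtain ⟨C, hC⟩ := isCompact_Icc.exists_bound_of_continuousOn hcont
  refine ⟨C, fun x hx => ?_⟩
  simpa [Function.update_of_ne hx.1.ne'] using hC x (Ioc_subset_Icc_self hx)

theorem exists_opNorm_le_of_continuousOn_Ioc_of_tendsto
    {E F : Type*} [NormedAddCommGroup E] [NormedSpace ℝ E] [CompleteSpace E]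
    [NormedAddCommGroup F] [NormedSpace ℝ F] {T : ℝ → E →L[ℝ] F} {a b : ℝ}
    (hT : ∀ w, ContinuousOn (fun h => T h w) (Ioc a b))
    (hL : ∀ w, ∃ L, Tendsto (fun h => T h w) (𝓝[Ioc a b] a) (𝓝 L)) :
    ∃ C, ∀ h ∈ Ioc a b, ‖T h‖ ≤ C := by
  have hpt : ∀ w, ∃ C, ∀ h : Ioc a b, ‖T h w‖ ≤ C := fun w => by
    obtain ⟨L, hL⟩ := hL w
    obtain ⟨C, hC⟩ := exists_norm_le_of_continuousOn_Ioc_of_tendsto (hT w) hL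
    exact ⟨C, fun h => hC h h.2⟩
  obtain ⟨C, hC⟩ := banach_steinhaus hpt
  exact ⟨C, fun h hh => hC ⟨h, hh⟩⟩

theorem Filter.Tendsto.apply_of_eventually_norm_le {α 𝕜 E F : Type*} [NontriviallyNormedField 𝕜]
    [SeminormedAddCommGroup E] [NormedSpace 𝕜 E] [SeminormedAddCommGroup F] [NormedSpace 𝕜 F]
    {l : Filter α} {T : α → E →L[𝕜] F} {w : α → E} {w₀ : E} {L : F} {C : ℝ}
    (hTw₀ : Tendsto (fun x => T x w₀) l (𝓝 L)) (hw : Tendsto w l (𝓝 w₀))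
    (hT : ∀ᶠ x in l, ‖T x‖ ≤ C) : Tendsto (fun x => T x (w x)) l (𝓝 L) := by
  have hsmall : Tendsto (fun x => T x (w x - w₀)) l (𝓝 0) := by
    refine squeeze_zero_norm' ?_ <| by
      simpa using (tendsto_iff_norm_sub_tendsto_zero.1 hw).const_mul C
    filter_upwards [hT] with x hx
    exact (T x).le_of_opNorm_le hx _
  simpa using hTw₀.add hsmall

section Propagator

variable {Y Y₁ : Type*} [NormedAddCommGroup Y] [NormedSpace ℝ Y] [NormedAddCommGroup Y₁]
  [NormedSpace ℝ Y₁] {J : Set ℝ} {Γ : ℝ → ℝ → Y →L[ℝ] Y} {ι : Y₁ →L[ℝ] Y} {s t : ℝ}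

theorem hasDerivWithinAt_propagator_Iic
    (hSemi : ∀ s r t : ℝ, s ∈ J → r ∈ J → t ∈ J → s ≤ r → r ≤ t →
      ∀ f : Y, Γ s r (Γ r t f) = Γ s t f)
    (hs : s ∈ J) (ht : t ∈ J) (hst : s ≤ t) {y a : Y}
    (hgen : Tendsto (fun h : ℝ => h⁻¹ • (Γ (s - h) s (Γ s t y) - Γ s t y))
      (𝓝[{h : ℝ | 0 < h ∧ s - h ∈ J}] 0) (𝓝 a)) :
    HasDerivWithinAt (fun u => Γ u t y) (-a) ({u ∈ J | u ≤ t} ∩ Iic s) s := by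
  refine hasDerivWithinAt_inter_Iic_of_tendsto <|
    (hgen.mono_left <| nhdsWithin_mono _ fun h hh => ⟨hh.1, hh.2.1⟩).congr' ?_
  filter_upwards [self_mem_nhdsWithin] with h ⟨_, hJ, _⟩
  rw [hSemi (s - h) s t hJ hs ht (by linarith) hst]

variable (Γ ι) in
noncomputable def rightDiffQuotient (s h : ℝ) : Y₁ →L[ℝ] Y := h⁻¹ • ((Γ s (s + h)).comp ι - ι)

@[simp]
theorem rightDiffQuotient_apply (h : ℝ) (w : Y₁) :
    rightDiffQuotient Γ ι s h w = h⁻¹ • (Γ s (s + h) (ι w) - ι w) :=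
  rfl

theorem exists_norm_rightDiffQuotient_le [CompleteSpace Y₁] (hJ : J.OrdConnected)
    (hs : s ∈ J) {b : ℝ} (hb : s + b ∈ J)
    (htCont : ∀ w : Y₁, ContinuousOn (fun u => Γ s u (ι w)) {u ∈ J | s ≤ u})
    (hgen : ∀ w : Y₁, ∃ L, Tendsto (fun h => rightDiffQuotient Γ ι s h w)
      (𝓝[{h : ℝ | 0 < h ∧ s + h ∈ J}] 0) (𝓝 L)) :
    ∃ C, ∀ h ∈ Ioc 0 b, ‖rightDiffQuotient Γ ι s h‖ ≤ C := by
  have hshift : MapsTo (s + ·) (Ioc 0 b) {u ∈ J | s ≤ u} := fun h hh =>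
    ⟨hJ.out hs hb ⟨by linarith [hh.1], by linarith [hh.2]⟩, by linarith [hh.1]⟩
  refine exists_opNorm_le_of_continuousOn_Ioc_of_tendsto (fun w => ?_) (fun w => ?_)
  · simp only [rightDiffQuotient_apply]
    exact (continuousOn_inv₀.mono fun h hh => hh.1.ne').smul
      (((htCont w).comp (continuous_const_add s).continuousOn hshift).sub continuousOn_const)
  · obtain ⟨L, hL⟩ := hgen w
    exact ⟨L, hL.mono_left <| nhdsWithin_mono _ fun h hh => ⟨hh.1, (hshift hh).1⟩⟩

theorem hasDerivWithinAt_propagator_Ici [CompleteSpace Y₁] (hJ : J.OrdConnected)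
    (hSemi : ∀ s r t : ℝ, s ∈ J → r ∈ J → t ∈ J → s ≤ r → r ≤ t →
      ∀ f : Y, Γ s r (Γ r t f) = Γ s t f)
    {Γ₁ : ℝ → ℝ → Y₁ → Y₁}
    (hΓ₁ : ∀ s t : ℝ, s ∈ J → t ∈ J → s ≤ t → ∀ f : Y₁, ι (Γ₁ s t f) = Γ s t (ι f))
    (hs : s ∈ J) (ht : t ∈ J) {f : Y₁}
    (hsCont : ContinuousWithinAt (fun u => Γ₁ u t f) {u ∈ J | u ≤ t} s)
    (htCont : ∀ w : Y₁, ContinuousOn (fun u => Γ s u (ι w)) {u ∈ J | s ≤ u})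
    {A : Y₁ → Y} (hgen : ∀ w : Y₁, Tendsto (fun h => rightDiffQuotient Γ ι s h w)
      (𝓝[{h : ℝ | 0 < h ∧ s + h ∈ J}] 0) (𝓝 (A w))) :
    HasDerivWithinAt (fun u => Γ u t (ι f)) (-A (Γ₁ s t f)) ({u ∈ J | u ≤ t} ∩ Ici s) s := by
  set l := 𝓝[{h : ℝ | 0 < h ∧ s + h ∈ {u ∈ J | u ≤ t}}] 0
  obtain ⟨C, hC⟩ := exists_norm_rightDiffQuotient_le hJ hs (b := t - s) (by simpa) htCont
    fun w => ⟨_, hgen w⟩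
  have hbound : ∀ᶠ h in l, ‖rightDiffQuotient Γ ι s h‖ ≤ C := by
    filter_upwards [self_mem_nhdsWithin] with h hh
    exact hC h ⟨hh.1, by linarith [hh.2.2]⟩
  have hshift : Tendsto (s + ·) l (𝓝[{u ∈ J | u ≤ t}] s) := by
    refine tendsto_nhdsWithin_of_tendsto_nhds_of_eventually_within _ ?_ ?_
    · simpa using ((continuous_const_add s).tendsto 0).mono_left nhdsWithin_le_nhds
    · filter_upwards [self_mem_nhdsWithin] with h hh using hh.2
  have hquot := ((hgen _).mono_left <| nhdsWithin_mono _ fun h hh => ⟨hh.1, hh.2.1⟩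
    ).apply_of_eventually_norm_le (hsCont.tendsto.comp hshift) hbound
  refine hasDerivWithinAt_inter_Ici_of_tendsto (hquot.neg.congr' ?_)
  filter_upwards [self_mem_nhdsWithin] with h ⟨_, hJ', hle⟩
  simp only [Function.comp_apply, rightDiffQuotient_apply, hΓ₁ (s + h) t hJ' ht hle,
    hSemi s (s + h) t hs hJ' ht (by linarith) hle, ← smul_neg, neg_sub]

end Propagator

theorem stmt_0_general
    {Y : Type*} [NormedAddCommGroup Y] [NormedSpace ℝ Y]
    {Y₁ : Type*} [NormedAddCommGroup Y₁] [NormedSpace ℝ Y₁] [CompleteSpace Y₁]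
    (ι : Y₁ →L[ℝ] Y)
    (J : Set ℝ) (hJ : J = Set.Ici (0 : ℝ) ∨ ∃ T : ℝ, 0 < T ∧ J = Set.Icc 0 T)
    (Γ : ℝ → ℝ → Y →L[ℝ] Y)
    (hSemi : ∀ s r t : ℝ, s ∈ J → r ∈ J → t ∈ J → s ≤ r → r ≤ t →
      ∀ f : Y, Γ s r (Γ r t f) = Γ s t f)
    (A : ℝ → Y₁ → Y)
    (hGen : ∀ t ∈ J, ∀ f : Y₁,
      Tendsto (fun h : ℝ => h⁻¹ • (Γ t (t + h) (ι f) - ι f))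
        (𝓝[{h : ℝ | 0 < h ∧ t + h ∈ J}] 0) (𝓝 (A t f)) ∧
      Tendsto (fun h : ℝ => h⁻¹ • (Γ (t - h) t (ι f) - ι f))
        (𝓝[{h : ℝ | 0 < h ∧ t - h ∈ J}] 0) (𝓝 (A t f)))
    (Γ₁ : ℝ → ℝ → Y₁ → Y₁)
    (hΓ₁ : ∀ s t : ℝ, s ∈ J → t ∈ J → s ≤ t → ∀ f : Y₁, ι (Γ₁ s t f) = Γ s t (ι f))
    (hsCont : ∀ t ∈ J, ∀ f : Y₁, ContinuousOn (fun u => Γ₁ u t f) {u ∈ J | u ≤ t})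
    (htCont : ∀ s ∈ J, ∀ f : Y₁, ContinuousOn (fun u => Γ s u (ι f)) {u ∈ J | s ≤ u}) :
    ∀ s t : ℝ, s ∈ J → t ∈ J → s ≤ t → ∀ f : Y₁,
      HasDerivWithinAt (fun u => Γ u t (ι f)) (-(A s (Γ₁ s t f))) {u ∈ J | u ≤ t} s := by
  intro s t hs ht hst f
  have hJc : J.OrdConnected := by
    rcases hJ with rfl | ⟨T, -, rfl⟩
    exacts [ordConnected_Ici, ordConnected_Icc]
  have hleft : HasDerivWithinAt (fun u => Γ u t (ι f)) (-A s (Γ₁ s t f))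
      ({u ∈ J | u ≤ t} ∩ Iic s) s :=
    hasDerivWithinAt_propagator_Iic hSemi hs ht hst <| by
      simpa only [hΓ₁ s t hs ht hst f] using (hGen s hs (Γ₁ s t f)).2
  have hright := hasDerivWithinAt_propagator_Ici hJc hSemi hΓ₁ hs ht
    (hsCont t ht f s ⟨hs, hst⟩) (htCont s hs) fun w => (hGen s hs w).1
  simpa only [← inter_union_distrib_left, Iic_union_Ici, inter_univ] using hleft.union hright

/-- Let `Γ` be a backward inhomogeneous `Y`-semigroup with generator `A`.
Assume `Y₁ ⊆ D(A)` (encoded by `hGen`, where `ι : Y₁ →L[ℝ] Y` is the continuous embedding),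
that `Γ` is `Y₁`-super strongly `s`-continuous (it preserves `Y₁`, encoded by `Γ₁` and `hΓ₁`,
and `u ↦ Γ(u,t)f` is `Y₁`-norm continuous), and that `Γ` is `Y₁`-strongly `t`-continuous.
Then `∂/∂s Γ(s,t)f = −A(s)Γ(s,t)f` for all `(s,t) ∈ Δ_J` and `f ∈ Y₁`. -/
theorem stmt_0
    {Y : Type*} [NormedAddCommGroup Y] [NormedSpace ℝ Y] [CompleteSpace Y]
    [TopologicalSpace.SeparableSpace Y]
    {Y₁ : Type*} [NormedAddCommGroup Y₁] [NormedSpace ℝ Y₁] [CompleteSpace Y₁]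
    [TopologicalSpace.SeparableSpace Y₁]
    (ι : Y₁ →L[ℝ] Y) (hι : Function.Injective ι)
    (J : Set ℝ) (hJ : J = Set.Ici (0 : ℝ) ∨ ∃ T : ℝ, 0 < T ∧ J = Set.Icc 0 T)
    (Γ : ℝ → ℝ → Y →L[ℝ] Y)
    (hId : ∀ t ∈ J, Γ t t = ContinuousLinearMap.id ℝ Y)
    (hSemi : ∀ s r t : ℝ, s ∈ J → r ∈ J → t ∈ J → s ≤ r → r ≤ t →
      ∀ f : Y, Γ s r (Γ r t f) = Γ s t f)
    (A : ℝ → Y₁ → Y)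
    (hGen : ∀ t ∈ J, ∀ f : Y₁,
      Tendsto (fun h : ℝ => h⁻¹ • (Γ t (t + h) (ι f) - ι f))
        (𝓝[{h : ℝ | 0 < h ∧ t + h ∈ J}] 0) (𝓝 (A t f)) ∧
      Tendsto (fun h : ℝ => h⁻¹ • (Γ (t - h) t (ι f) - ι f))
        (𝓝[{h : ℝ | 0 < h ∧ t - h ∈ J}] 0) (𝓝 (A t f)))
    (Γ₁ : ℝ → ℝ → Y₁ → Y₁)
    (hΓ₁ : ∀ s t : ℝ, s ∈ J → t ∈ J → s ≤ t → ∀ f : Y₁, ι (Γ₁ s t f) = Γ s t (ι f))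
    (hsCont : ∀ t ∈ J, ∀ f : Y₁, ContinuousOn (fun u => Γ₁ u t f) {u ∈ J | u ≤ t})
    (htCont : ∀ s ∈ J, ∀ f : Y₁, ContinuousOn (fun u => Γ s u (ι f)) {u ∈ J | s ≤ u}) :
    ∀ s t : ℝ, s ∈ J → t ∈ J → s ≤ t → ∀ f : Y₁,
      HasDerivWithinAt (fun u => Γ u t (ι f)) (-(A s (Γ₁ s t f))) {u ∈ J | u ≤ t} s :=
  stmt_0_general ι J hJ Γ hSemi A hGen Γ₁ hΓ₁ hsCont htCont
end

section
/- Let Γ be a backward inhomogeneous Y-semigroup with generator A. Assume Y₁ ⊆ D(A) and that Γ is Y-strongly t-continuous (i.e. for every f ∈ Y and s ∈ J the map u ↦ Γ(s,u)f is continuous from {u ∈ J : u ≥ s} to Y in the Y-norm). Then for all (s,t) ∈ Δ_J and all f ∈ Y₁, the map u ↦ Γ(s,u)f is differentiable in t with ∂/∂t Γ(s,t)f = Γ(s,t)A(t)f (derivative and limit in the Y-norm). -/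
/-!
For `u > t` the semigroup law writes the difference quotient of `u ↦ Γ(s,u) f` at `t` as
`Γ(s,t)` applied to the forward quotient `(Γ(t,u) f - f)/(u - t)`, which tends to `Γ(s,t) A(t) f`.
For `u < t` it is `Γ(s,u)` applied to the backward quotient `(Γ(u,t) f - f)/(t - u)`. There the
operator itself moves; by Banach–Steinhaus the strongly continuous family `Γ(s,u)`, `u ∈ [s,t]`,
is uniformly bounded, and together with strong continuity in `u` this gives the same limit.
-/

open Filter Topology Set

section UniformBound

variable {X E F : Type*} [TopologicalSpace X]
  [NormedAddCommGroup E] [NormedSpace ℝ E] [CompleteSpace E]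
  [NormedAddCommGroup F] [NormedSpace ℝ F]

theorem IsCompact.exists_bound_opNorm_of_continuousOn_apply {K : Set X} (hK : IsCompact K)
    {T : X → E →L[ℝ] F} (hT : ∀ x, ContinuousOn (fun u => T u x) K) :
    ∃ C, ∀ u ∈ K, ‖T u‖ ≤ C := by
  obtain ⟨C, hC⟩ : ∃ C, ∀ u : K, ‖T u‖ ≤ C := by
    refine banach_steinhaus fun x => ?_
    obtain ⟨C, hC⟩ := hK.exists_bound_of_continuousOn (hT x)
    exact ⟨C, fun u => hC u u.2⟩
  exact ⟨C, fun u hu => hC ⟨u, hu⟩⟩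

end UniformBound

theorem Filter.Tendsto.clm_apply_of_eventually_norm_le {ι E F : Type*}
    [NormedAddCommGroup E] [NormedSpace ℝ E] [NormedAddCommGroup F] [NormedSpace ℝ F]
    {l : Filter ι} {T : ι → E →L[ℝ] F} {v : ι → E} {a : E} {b : F} {C : ℝ}
    (hv : Tendsto v l (𝓝 a)) (hTa : Tendsto (fun i => T i a) l (𝓝 b))
    (hT : ∀ᶠ i in l, ‖T i‖ ≤ C) :
    Tendsto (fun i => T i (v i)) l (𝓝 b) := by
  have hdiff : Tendsto (fun i => T i (v i - a)) l (𝓝 0) := by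
    have hva : Tendsto (fun i => ‖v i - a‖) l (𝓝 0) := by
      simpa using (hv.sub_const a).norm
    refine squeeze_zero_norm' ?_ (by simpa using hva.const_mul C)
    filter_upwards [hT] with i hi
    exact (T i).le_of_opNorm_le hi _
  simpa using hdiff.add hTa

theorem tendsto_sub_nhdsWithin_Ioi {J S : Set ℝ} (hS : S ⊆ J) (t : ℝ) :
    Tendsto (fun u => u - t) (𝓝[S ∩ Ioi t] t) (𝓝[{h : ℝ | 0 < h ∧ t + h ∈ J}] 0) := by
  refine tendsto_nhdsWithin_of_tendsto_nhds_of_eventually_within _ ?_ ?_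
  · exact tendsto_nhdsWithin_of_tendsto_nhds (by simpa using (tendsto_id (x := 𝓝 t)).sub_const t)
  · filter_upwards [self_mem_nhdsWithin] with u hu
    exact ⟨sub_pos.mpr hu.2, by simpa using hS hu.1⟩

theorem tendsto_sub_nhdsWithin_Iio {J S : Set ℝ} (hS : S ⊆ J) (t : ℝ) :
    Tendsto (fun u => t - u) (𝓝[S ∩ Iio t] t) (𝓝[{h : ℝ | 0 < h ∧ t - h ∈ J}] 0) := by
  refine tendsto_nhdsWithin_of_tendsto_nhds_of_eventually_within _ ?_ ?_
  · exact tendsto_nhdsWithin_of_tendsto_nhds (by simpa using (tendsto_id (x := 𝓝 t)).const_sub t)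
  · filter_upwards [self_mem_nhdsWithin] with u hu
    exact ⟨sub_pos.mpr hu.2, by simpa using hS hu.1⟩

section Propagator

variable {Y : Type*} [NormedAddCommGroup Y] [NormedSpace ℝ Y]
  (Γ : ℝ → ℝ → Y →L[ℝ] Y) {S : Set ℝ} {s t : ℝ} {x a : Y}

theorem tendsto_slope_propagator_nhdsWithin_Ioi
    (hsemi : ∀ u ∈ S, t < u → Γ s t (Γ t u x) = Γ s u x)
    (hgen : Tendsto (fun u => (u - t)⁻¹ • (Γ t u x - x)) (𝓝[S ∩ Ioi t] t) (𝓝 a)) :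
    Tendsto (slope (fun u => Γ s u x) t) (𝓝[S ∩ Ioi t] t) (𝓝 (Γ s t a)) := by
  refine ((Γ s t).continuous.tendsto a |>.comp hgen).congr' ?_
  filter_upwards [self_mem_nhdsWithin] with u hu
  simp only [Function.comp_apply, slope, vsub_eq_sub, map_smul, map_sub, hsemi u hu.1 hu.2]

theorem tendsto_slope_propagator_nhdsWithin_Iio {C : ℝ}
    (hsemi : ∀ u ∈ S, u < t → Γ s u (Γ u t x) = Γ s t x)
    (hgen : Tendsto (fun u => (t - u)⁻¹ • (Γ u t x - x)) (𝓝[S ∩ Iio t] t) (𝓝 a))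
    (hbound : ∀ᶠ u in 𝓝[S ∩ Iio t] t, ‖Γ s u‖ ≤ C)
    (hcont : Tendsto (fun u => Γ s u a) (𝓝[S ∩ Iio t] t) (𝓝 (Γ s t a))) :
    Tendsto (slope (fun u => Γ s u x) t) (𝓝[S ∩ Iio t] t) (𝓝 (Γ s t a)) := by
  refine (hgen.clm_apply_of_eventually_norm_le hcont hbound).congr' ?_
  filter_upwards [self_mem_nhdsWithin] with u hu
  rw [slope_def_module, ← neg_sub t u, inv_neg, neg_smul, ← smul_neg, neg_sub, map_smul,
    map_sub, hsemi u hu.1 hu.2]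

end Propagator

theorem hasDerivWithinAt_of_tendsto_slope_Iio_Ioi {E : Type*} [NormedAddCommGroup E]
    [NormedSpace ℝ E] {f : ℝ → E} {f' : E} {S : Set ℝ} {t : ℝ}
    (hleft : Tendsto (slope f t) (𝓝[S ∩ Iio t] t) (𝓝 f'))
    (hright : Tendsto (slope f t) (𝓝[S ∩ Ioi t] t) (𝓝 f')) :
    HasDerivWithinAt f f' S t := by
  have hS : S \ {t} ⊆ S ∩ Iio t ∪ S ∩ Ioi t := fun u ⟨hu, hut⟩ =>
    (lt_or_gt_of_ne hut).imp (⟨hu, ·⟩) (⟨hu, ·⟩)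
  rw [hasDerivWithinAt_iff_tendsto_slope]
  refine Tendsto.mono_left ?_ (nhdsWithin_mono t hS)
  rw [nhdsWithin_union]
  exact tendsto_sup.mpr ⟨hleft, hright⟩

theorem stmt_1_general
    {Y : Type*} [NormedAddCommGroup Y] [NormedSpace ℝ Y] [CompleteSpace Y]
    {Y₁ : Type*} [NormedAddCommGroup Y₁] [NormedSpace ℝ Y₁]
    (ι : Y₁ →L[ℝ] Y)
    (J : Set ℝ) (hJ : J = Set.Ici (0 : ℝ) ∨ ∃ T : ℝ, 0 < T ∧ J = Set.Icc 0 T)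
    (Γ : ℝ → ℝ → Y →L[ℝ] Y)
    (hSemi : ∀ s r t : ℝ, s ∈ J → r ∈ J → t ∈ J → s ≤ r → r ≤ t →
      ∀ f : Y, Γ s r (Γ r t f) = Γ s t f)
    (A : ℝ → Y₁ → Y)
    (hGen : ∀ t ∈ J, ∀ f : Y₁,
      Tendsto (fun h : ℝ => h⁻¹ • (Γ t (t + h) (ι f) - ι f))
        (𝓝[{h : ℝ | 0 < h ∧ t + h ∈ J}] 0) (𝓝 (A t f)) ∧
      Tendsto (fun h : ℝ => h⁻¹ • (Γ (t - h) t (ι f) - ι f))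
        (𝓝[{h : ℝ | 0 < h ∧ t - h ∈ J}] 0) (𝓝 (A t f)))
    (htCont : ∀ s ∈ J, ∀ f : Y, ContinuousOn (fun u => Γ s u f) {u ∈ J | s ≤ u}) :
    ∀ s t : ℝ, s ∈ J → t ∈ J → s ≤ t → ∀ f : Y₁,
      HasDerivWithinAt (fun u => Γ s u (ι f)) (Γ s t (A t f)) {u ∈ J | s ≤ u} t := by
  intro s t hs ht hst f
  have hSJ : {u ∈ J | s ≤ u} ⊆ J := sep_subset _ _
  have hIcc : Icc s t ⊆ {u ∈ J | s ≤ u} := fun u hu => by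
    refine ⟨?_, hu.1⟩
    rcases hJ with rfl | ⟨T, -, rfl⟩
    exacts [ordConnected_Ici.out hs ht hu, ordConnected_Icc.out hs ht hu]
  obtain ⟨C, hC⟩ := isCompact_Icc.exists_bound_opNorm_of_continuousOn_apply
    fun y => (htCont s hs y).mono hIcc
  refine hasDerivWithinAt_of_tendsto_slope_Iio_Ioi ?_ ?_
  · refine tendsto_slope_propagator_nhdsWithin_Iio Γ (C := C)
      (fun u hu hut => hSemi s u t hs hu.1 ht hu.2 hut.le _)
      (((hGen t ht f).2.comp (tendsto_sub_nhdsWithin_Iio hSJ t)).congr fun u => by simp)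
      ?_ ((htCont s hs _ t ⟨ht, hst⟩).mono_left (nhdsWithin_mono _ inter_subset_left))
    filter_upwards [self_mem_nhdsWithin] with u hu
    exact hC u ⟨hu.1.2, hu.2.le⟩
  · exact tendsto_slope_propagator_nhdsWithin_Ioi Γ
      (fun u hu htu => hSemi s t u hs ht hu.1 hst htu.le _)
      (((hGen t ht f).1.comp (tendsto_sub_nhdsWithin_Ioi hSJ t)).congr fun u => by simp)

/-- Let `Γ` be a backward inhomogeneous `Y`-semigroup with generator `A`.
Assume `Y₁ ⊆ D(A)` (encoded by `hGen`) and that `Γ` is `Y`-strongly `t`-continuous. Then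
`∂/∂t Γ(s,t)f = Γ(s,t)A(t)f` for all `(s,t) ∈ Δ_J` and `f ∈ Y₁`. -/
theorem stmt_1
    {Y : Type*} [NormedAddCommGroup Y] [NormedSpace ℝ Y] [CompleteSpace Y]
    [TopologicalSpace.SeparableSpace Y]
    {Y₁ : Type*} [NormedAddCommGroup Y₁] [NormedSpace ℝ Y₁] [CompleteSpace Y₁]
    [TopologicalSpace.SeparableSpace Y₁]
    (ι : Y₁ →L[ℝ] Y) (hι : Function.Injective ι)
    (J : Set ℝ) (hJ : J = Set.Ici (0 : ℝ) ∨ ∃ T : ℝ, 0 < T ∧ J = Set.Icc 0 T)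
    (Γ : ℝ → ℝ → Y →L[ℝ] Y)
    (hId : ∀ t ∈ J, Γ t t = ContinuousLinearMap.id ℝ Y)
    (hSemi : ∀ s r t : ℝ, s ∈ J → r ∈ J → t ∈ J → s ≤ r → r ≤ t →
      ∀ f : Y, Γ s r (Γ r t f) = Γ s t f)
    (A : ℝ → Y₁ → Y)
    (hGen : ∀ t ∈ J, ∀ f : Y₁,
      Tendsto (fun h : ℝ => h⁻¹ • (Γ t (t + h) (ι f) - ι f))
        (𝓝[{h : ℝ | 0 < h ∧ t + h ∈ J}] 0) (𝓝 (A t f)) ∧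
      Tendsto (fun h : ℝ => h⁻¹ • (Γ (t - h) t (ι f) - ι f))
        (𝓝[{h : ℝ | 0 < h ∧ t - h ∈ J}] 0) (𝓝 (A t f)))
    (htCont : ∀ s ∈ J, ∀ f : Y, ContinuousOn (fun u => Γ s u f) {u ∈ J | s ≤ u}) :
    ∀ s t : ℝ, s ∈ J → t ∈ J → s ≤ t → ∀ f : Y₁,
      HasDerivWithinAt (fun u => Γ s u (ι f)) (Γ s t (A t f)) {u ∈ J | s ≤ u} t :=
  stmt_1_general ι J hJ Γ hSemi A hGen htCont
end

section
/- Let Γ be a backward inhomogeneous Y-semigroup with generator A such that Y₁ ⊆ D(A), Γ is Y-strongly t-continuous, and hence ∂/∂t Γ(s,t)f = Γ(s,t)A(t)f for all (s,t) ∈ Δ_J and f ∈ Y₁. Assume in addition that for every t ∈ J the restriction of A(t) to Y₁ is a bounded linear operator from Y₁ to Y, and that for every (s,t) ∈ Δ_J the function u ↦ ‖A(u)‖_{B(Y₁,Y)} is Lebesgue integrable on [s,t]. Then for every f ∈ Y₁ and every (s,t) ∈ Δ_J, the map u ↦ Γ(s,u)A(u)f is Bochner integrable on [s,t] and Γ(s,t)f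 − f = ∫_s^t Γ(s,u)A(u)f du (Bochner integral in Y). -/
/-!
The orbit `u ↦ Γ(s,u) f` of `f ∈ Y₁` is continuous on `[s,t]` and differentiable in its interior
with derivative `Γ(s,u) A(u) f`, so the claim is the fundamental theorem of calculus once that
derivative is known to be Bochner integrable. It is strongly measurable, being a.e. the derivative
of a function, and it is dominated by `C ‖f‖ ‖A(u)‖`, where `C` bounds `‖Γ(s,u)‖` on `[s,t]` by the
Banach–Steinhaus theorem applied to the strongly continuous family `u ↦ Γ(s,u)`.
-/

open Filter Topology Set MeasureTheory

theorem exists_forall_norm_le_of_continuousOn_apply {X 𝕜 E F : Type*} [TopologicalSpace X]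
    [NontriviallyNormedField 𝕜] [NormedAddCommGroup E] [NormedSpace 𝕜 E] [CompleteSpace E]
    [NormedAddCommGroup F] [NormedSpace 𝕜 F] {G : X → E →L[𝕜] F} {K : Set X} (hK : IsCompact K)
    (hG : ∀ x, ContinuousOn (fun u => G u x) K) : ∃ C, ∀ u ∈ K, ‖G u‖ ≤ C := by
  have hpointwise : ∀ x, ∃ C, ∀ u : K, ‖G u x‖ ≤ C := fun x => by
    obtain ⟨C, hC⟩ := hK.bddAbove_image (hG x).norm
    exact ⟨C, fun u => hC ⟨u, u.2, rfl⟩⟩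
  obtain ⟨C, hC⟩ := banach_steinhaus hpointwise
  exact ⟨C, fun u hu => hC ⟨u, hu⟩⟩

theorem aestronglyMeasurable_of_hasDerivAt_Ioo {F : Type*} [NormedAddCommGroup F]
    [NormedSpace ℝ F] [CompleteSpace F] {g g' : ℝ → F} {a b : ℝ}
    (hg : ∀ u ∈ Ioo a b, HasDerivAt g (g' u) u) :
    AEStronglyMeasurable g' (volume.restrict (Icc a b)) := by
  refine (aestronglyMeasurable_deriv g _).congr ?_
  rw [← Measure.restrict_congr_set Ioo_ae_eq_Icc]
  filter_upwards [ae_restrict_mem measurableSet_Ioo] with u hu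
  exact (hg u hu).deriv

theorem integrableOn_apply_apply_of_continuousOn_apply {X E₁ E F : Type*} [TopologicalSpace X]
    [T2Space X] [MeasurableSpace X] [OpensMeasurableSpace X] [NormedAddCommGroup E₁]
    [NormedSpace ℝ E₁] [NormedAddCommGroup E] [NormedSpace ℝ E] [CompleteSpace E]
    [NormedAddCommGroup F] [NormedSpace ℝ F]
    {μ : Measure X} {K : Set X} (hK : IsCompact K) {G : X → E →L[ℝ] F} {A : X → E₁ →L[ℝ] E}
    (hG : ∀ x, ContinuousOn (fun u => G u x) K) (hA : IntegrableOn (fun u => ‖A u‖) K μ)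
    {f : E₁} (hmeas : AEStronglyMeasurable (fun u => G u (A u f)) (μ.restrict K)) :
    IntegrableOn (fun u => G u (A u f)) K μ := by
  obtain ⟨C, hC⟩ := exists_forall_norm_le_of_continuousOn_apply hK hG
  refine Integrable.mono' (hA.const_mul (C * ‖f‖)) hmeas ?_
  filter_upwards [ae_restrict_mem hK.measurableSet] with u hu
  have hC0 : 0 ≤ C := (norm_nonneg _).trans (hC u hu)
  calc ‖G u (A u f)‖ ≤ ‖G u‖ * ‖A u f‖ := (G u).le_opNorm _
    _ ≤ C * (‖A u‖ * ‖f‖) := mul_le_mul (hC u hu) ((A u).le_opNorm f) (norm_nonneg _) hC0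
    _ = C * ‖f‖ * ‖A u‖ := by ring

theorem stmt_2_general
    {Y : Type*} [NormedAddCommGroup Y] [NormedSpace ℝ Y] [CompleteSpace Y]
    {Y₁ : Type*} [NormedAddCommGroup Y₁] [NormedSpace ℝ Y₁]
    (ι : Y₁ →L[ℝ] Y)
    (J : Set ℝ) (hJ : J = Set.Ici (0 : ℝ) ∨ ∃ T : ℝ, 0 < T ∧ J = Set.Icc 0 T)
    (Γ : ℝ → ℝ → Y →L[ℝ] Y)
    (hId : ∀ t ∈ J, Γ t t = ContinuousLinearMap.id ℝ Y)
    (A : ℝ → Y₁ →L[ℝ] Y)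
    (htCont : ∀ s ∈ J, ∀ f : Y, ContinuousOn (fun u => Γ s u f) {u ∈ J | s ≤ u})
    (hDeriv : ∀ s t : ℝ, s ∈ J → t ∈ J → s ≤ t → ∀ f : Y₁,
      HasDerivWithinAt (fun u => Γ s u (ι f)) (Γ s t (A t f)) {u ∈ J | s ≤ u} t)
    (hNormInt : ∀ s t : ℝ, s ∈ J → t ∈ J → s ≤ t →
      IntegrableOn (fun u => ‖A u‖) (Set.Icc s t)) :
    ∀ s t : ℝ, s ∈ J → t ∈ J → s ≤ t → ∀ f : Y₁,
      IntegrableOn (fun u => Γ s u (A u f)) (Set.Icc s t) ∧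
      Γ s t (ι f) - ι f = ∫ u in s..t, Γ s u (A u f) := by
  intro s t hs ht hst f
  have hJ_ordConnected : J.OrdConnected := by
    rcases hJ with rfl | ⟨T, -, rfl⟩ <;> infer_instance
  have hIcc : Icc s t ⊆ {u ∈ J | s ≤ u} := fun u hu => ⟨hJ_ordConnected.out hs ht hu, hu.1⟩
  have hcont : ∀ x, ContinuousOn (fun u => Γ s u x) (Icc s t) := fun x =>
    (htCont s hs x).mono hIcc
  have hderiv : ∀ u ∈ Ioo s t, HasDerivAt (fun u => Γ s u (ι f)) (Γ s u (A u f)) u :=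
    fun u hu => (hDeriv s u hs (hIcc (Ioo_subset_Icc_self hu)).1 hu.1.le f).hasDerivAt <|
      mem_of_superset (Ioo_mem_nhds hu.1 hu.2) (Ioo_subset_Icc_self.trans hIcc)
  have hInt : IntegrableOn (fun u => Γ s u (A u f)) (Icc s t) :=
    integrableOn_apply_apply_of_continuousOn_apply isCompact_Icc hcont (hNormInt s t hs ht hst)
      (aestronglyMeasurable_of_hasDerivAt_Ioo hderiv)
  refine ⟨hInt, ?_⟩
  rw [intervalIntegral.integral_eq_sub_of_hasDerivAt_of_le hst (hcont _) hderiv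
    ((intervalIntegrable_iff_integrableOn_Icc_of_le hst).mpr hInt), hId s hs,
    ContinuousLinearMap.id_apply]

/-- Let `Γ` be a backward inhomogeneous `Y`-semigroup with generator `A` such
that `Y₁ ⊆ D(A)` (`hGen`), `Γ` is `Y`-strongly `t`-continuous, and hence
`∂/∂t Γ(s,t)f = Γ(s,t)A(t)f` (`hDeriv`).  Assume in addition that each `A(t)` restricted to
`Y₁` is a bounded operator `Y₁ → Y` (so `A : ℝ → Y₁ →L[ℝ] Y`) and that `u ↦ ‖A(u)‖_{B(Y₁,Y)}`
is integrable on `[s,t]`.  Then for every `f ∈ Y₁` and `(s,t) ∈ Δ_J`, `u ↦ Γ(s,u)A(u)f` is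
Bochner integrable on `[s,t]` and `Γ(s,t)f − f = ∫_s^t Γ(s,u)A(u)f du`. -/
theorem stmt_2
    {Y : Type*} [NormedAddCommGroup Y] [NormedSpace ℝ Y] [CompleteSpace Y]
    [TopologicalSpace.SeparableSpace Y]
    {Y₁ : Type*} [NormedAddCommGroup Y₁] [NormedSpace ℝ Y₁] [CompleteSpace Y₁]
    [TopologicalSpace.SeparableSpace Y₁]
    (ι : Y₁ →L[ℝ] Y) (hι : Function.Injective ι)
    (J : Set ℝ) (hJ : J = Set.Ici (0 : ℝ) ∨ ∃ T : ℝ, 0 < T ∧ J = Set.Icc 0 T)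
    (Γ : ℝ → ℝ → Y →L[ℝ] Y)
    (hId : ∀ t ∈ J, Γ t t = ContinuousLinearMap.id ℝ Y)
    (hSemi : ∀ s r t : ℝ, s ∈ J → r ∈ J → t ∈ J → s ≤ r → r ≤ t →
      ∀ f : Y, Γ s r (Γ r t f) = Γ s t f)
    (A : ℝ → Y₁ →L[ℝ] Y)
    (hGen : ∀ t ∈ J, ∀ f : Y₁,
      Tendsto (fun h : ℝ => h⁻¹ • (Γ t (t + h) (ι f) - ι f))
        (𝓝[{h : ℝ | 0 < h ∧ t + h ∈ J}] 0) (𝓝 (A t f)) ∧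
      Tendsto (fun h : ℝ => h⁻¹ • (Γ (t - h) t (ι f) - ι f))
        (𝓝[{h : ℝ | 0 < h ∧ t - h ∈ J}] 0) (𝓝 (A t f)))
    (htCont : ∀ s ∈ J, ∀ f : Y, ContinuousOn (fun u => Γ s u f) {u ∈ J | s ≤ u})
    (hDeriv : ∀ s t : ℝ, s ∈ J → t ∈ J → s ≤ t → ∀ f : Y₁,
      HasDerivWithinAt (fun u => Γ s u (ι f)) (Γ s t (A t f)) {u ∈ J | s ≤ u} t)
    (hNormInt : ∀ s t : ℝ, s ∈ J → t ∈ J → s ≤ t →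
      IntegrableOn (fun u => ‖A u‖) (Set.Icc s t)) :
    ∀ s t : ℝ, s ∈ J → t ∈ J → s ≤ t → ∀ f : Y₁,
      IntegrableOn (fun u => Γ s u (A u f)) (Set.Icc s t) ∧
      Γ s t (ι f) - ι f = ∫ u in s..t, Γ s u (A u f) :=
  stmt_2_general ι J hJ Γ hId A htCont hDeriv hNormInt
end

section
/- Let Γ be a regular backward inhomogeneous Y-semigroup with generator A, let (s,t) ∈ Δ_J, and assume that for every u ∈ J the restriction of A(u) to Y₁ is a bounded operator from Y₁ to Y and that u ↦ ‖A(u)‖_{B(Y₁,Y)} is integrable on [s,t]. Then for every f ∈ D(A ∈ Y₁) := {f ∈ D(A) ∩ Y₁ : A(u)f ∈ Y₁ for all u ∈ J} one has Γ(s,t)f = f + ∫_s^t A(u)f du + ∫_s^t ∫_s^u Γ(s,r)A(r)A(u)f dr du, where all integrals are Bochner integrals in Y. -/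
/-!
Differentiating `u ↦ Γ(s,u)g` and integrating gives `∫_s^b Γ(s,r)A(r)g dr = Γ(s,b)g - g` for
`g ∈ Y₁`. Applied to `g = A(u)f` with `b = u` this turns the double integral into
`∫_s^t (Γ(s,u)A(u)f - A(u)f) du`, and applied to `g = f` with `b = t` it identifies
`∫_s^t Γ(s,u)A(u)f du` with `Γ(s,t)f - f`. Splitting the integral of the difference needs
`u ↦ A(u)f` to be integrable; given the bound `‖A(u)f‖ ≤ ‖A(u)‖ ‖f‖`, this comes down to
measurability. That holds because `A(u)f` is the limit of the backward slopes
`n (Γ(u - 1/n, u)f - f)`, and `u ↦ Γ(u - c, u)f` is measurable since `Γ(v,u)f` is separately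
continuous on the triangle `v ≤ u`: rounding `u - c` up to a grid `δℤ` makes it piecewise
continuous in `u`.
-/

open Filter Topology Set MeasureTheory

lemma le_ceil_div_mul (x : ℝ) {δ : ℝ} (hδ : 0 < δ) : x ≤ ⌈x / δ⌉ * δ :=
  calc x = x / δ * δ := (div_mul_cancel₀ x hδ.ne').symm
    _ ≤ ⌈x / δ⌉ * δ := by gcongr; exact Int.le_ceil _

lemma ceil_div_mul_le (x : ℝ) {δ : ℝ} (hδ : 0 < δ) : ⌈x / δ⌉ * δ ≤ x + δ :=
  calc (⌈x / δ⌉ : ℝ) * δ ≤ (x / δ + 1) * δ := by gcongr; exact (Int.ceil_lt_add_one _).le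
    _ = x + δ := by rw [add_mul, one_mul, div_mul_cancel₀ x hδ.ne']

section SeparatelyContinuous

variable {E : Type*} [TopologicalSpace E] [TopologicalSpace.PseudoMetrizableSpace E]
  {F : ℝ → ℝ → E} {a b c : ℝ}

lemma aestronglyMeasurable_apply_ceil_grid
    (hright : ∀ v ∈ Icc a b, ContinuousOn (F v) (Icc v b)) {δ : ℝ} (hδ : 0 < δ) (hδc : δ ≤ c) :
    AEStronglyMeasurable (fun u => F (⌈(u - c) / δ⌉ * δ) u)
      (volume.restrict (Icc (a + c) b)) := by
  set strip : ℤ → Set ℝ := fun k => Icc (a + c) b ∩ {u | ⌈(u - c) / δ⌉ = k}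
  have hcover : Icc (a + c) b = ⋃ k, strip k := by ext u; simp [strip]
  rw [hcover, aestronglyMeasurable_iUnion_iff]
  intro k
  have hbounds : ∀ u ∈ strip k, u - c ≤ k * δ ∧ k * δ ≤ u := by
    rintro u ⟨-, hk : ⌈(u - c) / δ⌉ = k⟩
    have hlow := le_ceil_div_mul (u - c) hδ
    have hupp := ceil_div_mul_le (u - c) hδ
    rw [hk] at hlow hupp
    exact ⟨hlow, by linarith⟩
  rcases (strip k).eq_empty_or_nonempty with hempty | ⟨u₀, hu₀⟩
  · simp [hempty]
  have hv : (k * δ : ℝ) ∈ Icc a b := by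
    obtain ⟨hlow, hupp⟩ := hbounds u₀ hu₀
    exact ⟨by linarith [hu₀.1.1], hupp.trans hu₀.1.2⟩
  have hsub : strip k ⊆ Icc (k * δ) b := fun u hu => ⟨(hbounds u hu).2, hu.1.2⟩
  have hstrip : MeasurableSet (strip k) := measurableSet_Icc.inter
    (measurableSet_eq_fun (Int.measurable_ceil.comp ((measurable_id.sub_const c).div_const δ))
      measurable_const)
  refine (((hright _ hv).aestronglyMeasurable measurableSet_Icc).mono_set hsub).congr ?_
  filter_upwards [ae_restrict_mem hstrip] with u hu
  rw [show ⌈(u - c) / δ⌉ = k from hu.2]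

theorem aestronglyMeasurable_apply_sub_of_continuousOn (hc : 0 < c)
    (hleft : ∀ u ∈ Icc a b, ContinuousOn (fun v => F v u) (Icc a u))
    (hright : ∀ v ∈ Icc a b, ContinuousOn (F v) (Icc v b)) :
    AEStronglyMeasurable (fun u => F (u - c) u) (volume.restrict (Icc (a + c) b)) := by
  set δ : ℕ → ℝ := fun m => c * (1 / ((m : ℝ) + 1))
  have hδ : ∀ m, 0 < δ m := fun m => by positivity
  have hδc : ∀ m, δ m ≤ c := fun m =>
    mul_le_of_le_one_right hc.le (div_le_one_of_le₀ (by linarith [m.cast_nonneg' (α := ℝ)])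
      (by positivity))
  have hδ0 : Tendsto δ atTop (𝓝 0) := by
    simpa [δ] using tendsto_one_div_add_atTop_nhds_zero_nat.const_mul c
  refine aestronglyMeasurable_of_tendsto_ae atTop
    (fun m => aestronglyMeasurable_apply_ceil_grid hright (hδ m) (hδc m)) ?_
  filter_upwards [ae_restrict_mem measurableSet_Icc] with u ⟨hcu, hub⟩
  have hround : Tendsto (fun m => (⌈(u - c) / δ m⌉ : ℝ) * δ m) atTop (𝓝[Icc a u] (u - c)) := by
    refine tendsto_nhdsWithin_iff.2 ⟨?_, Eventually.of_forall fun m => ⟨?_, ?_⟩⟩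
    · exact tendsto_of_tendsto_of_tendsto_of_le_of_le tendsto_const_nhds
        (by simpa using tendsto_const_nhds.add hδ0)
        (fun m => le_ceil_div_mul _ (hδ m)) (fun m => ceil_div_mul_le _ (hδ m))
    · linarith [le_ceil_div_mul (u - c) (hδ m)]
    · linarith [ceil_div_mul_le (u - c) (hδ m), hδc m]
  exact ((hleft u ⟨by linarith, hub⟩) (u - c) ⟨by linarith, by linarith⟩).tendsto.comp hround

theorem aestronglyMeasurable_of_tendsto_slope_left {E : Type*} [NormedAddCommGroup E]
    [NormedSpace ℝ E] {F : ℝ → ℝ → E} {g : ℝ → E} {a b : ℝ} (x : E)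
    (hleft : ∀ u ∈ Icc a b, ContinuousOn (fun v => F v u) (Icc a u))
    (hright : ∀ v ∈ Icc a b, ContinuousOn (F v) (Icc v b))
    (hlim : ∀ u ∈ Ioc a b, Tendsto (fun h => h⁻¹ • (F (u - h) u - x)) (𝓝[>] 0) (𝓝 (g u))) :
    AEStronglyMeasurable g (volume.restrict (Ioc a b)) := by
  set h : ℕ → ℝ := fun n => 1 / ((n : ℝ) + 1)
  have hpos : ∀ n, 0 < h n := fun n => by positivity
  have hh : Tendsto h atTop (𝓝[>] 0) :=
    tendsto_nhdsWithin_iff.2 ⟨tendsto_one_div_add_atTop_nhds_zero_nat, .of_forall hpos⟩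
  refine aestronglyMeasurable_of_tendsto_ae atTop
    (f := fun n => (Ici (a + h n)).indicator fun u => (h n)⁻¹ • (F (u - h n) u - x))
    (fun n => ?_) ?_
  · rw [aestronglyMeasurable_indicator_iff measurableSet_Ici,
      Measure.restrict_restrict measurableSet_Ici]
    refine (((aestronglyMeasurable_apply_sub_of_continuousOn (hpos n) hleft hright).sub
      aestronglyMeasurable_const).const_smul _).mono_set
      (fun u hu => ⟨hu.1, hu.2.2⟩ : Ici (a + h n) ∩ Ioc a b ⊆ Icc (a + h n) b)
  · filter_upwards [ae_restrict_mem measurableSet_Ioc] with u hu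
    refine ((hlim u hu).comp hh).congr' ?_
    filter_upwards [tendsto_nhdsWithin_iff.1 hh |>.1.eventually (eventually_le_nhds
      (sub_pos.2 hu.1))] with n hn
    simp only [Function.comp_apply]
    rw [indicator_of_mem (show u ∈ Ici (a + h n) by simp only [mem_Ici]; linarith)]

end SeparatelyContinuous

theorem integral_eq_sub_of_hasDerivWithinAt_Icc {E : Type*} [NormedAddCommGroup E]
    [NormedSpace ℝ E] [CompleteSpace E] {f f' : ℝ → E} {a b : ℝ} (hab : a ≤ b)
    (hderiv : ∀ x ∈ Icc a b, HasDerivWithinAt f (f' x) (Icc a b) x)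
    (hint : IntegrableOn f' (Icc a b)) :
    ∫ x in a..b, f' x = f b - f a :=
  intervalIntegral.integral_eq_sub_of_hasDerivAt_of_le hab
    (fun x hx => (hderiv x hx).continuousWithinAt)
    (fun x hx => (hderiv x (Ioo_subset_Icc_self hx)).hasDerivAt (Icc_mem_nhds hx.1 hx.2))
    ((intervalIntegrable_iff_integrableOn_Icc_of_le hab).2 hint)

theorem stmt_5_general
    {Y : Type*} [NormedAddCommGroup Y] [NormedSpace ℝ Y] [CompleteSpace Y]
    {Y₁ : Type*} [NormedAddCommGroup Y₁] [NormedSpace ℝ Y₁]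
    (ι : Y₁ →L[ℝ] Y)
    (J : Set ℝ) (hJ : J = Set.Ici (0 : ℝ) ∨ ∃ T : ℝ, 0 < T ∧ J = Set.Icc 0 T)
    (Γ : ℝ → ℝ → Y →L[ℝ] Y)
    (hId : ∀ t ∈ J, Γ t t = ContinuousLinearMap.id ℝ Y)
    (A : ℝ → Y₁ →L[ℝ] Y)
    (hGen : ∀ t ∈ J, ∀ f : Y₁,
      Tendsto (fun h : ℝ => h⁻¹ • (Γ t (t + h) (ι f) - ι f))
        (𝓝[{h : ℝ | 0 < h ∧ t + h ∈ J}] 0) (𝓝 (A t f)) ∧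
      Tendsto (fun h : ℝ => h⁻¹ • (Γ (t - h) t (ι f) - ι f))
        (𝓝[{h : ℝ | 0 < h ∧ t - h ∈ J}] 0) (𝓝 (A t f)))
    (Γ₁ : ℝ → ℝ → Y₁ → Y₁)
    (hsDeriv : ∀ s t : ℝ, s ∈ J → t ∈ J → s ≤ t → ∀ f : Y₁,
      HasDerivWithinAt (fun u => Γ u t (ι f)) (-(A s (Γ₁ s t f))) {u ∈ J | u ≤ t} s)
    (htDeriv : ∀ s t : ℝ, s ∈ J → t ∈ J → s ≤ t → ∀ f : Y₁,
      HasDerivWithinAt (fun u => Γ s u (ι f)) (Γ s t (A t f)) {u ∈ J | s ≤ u} t)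
    (hIntReg : ∀ s t : ℝ, s ∈ J → t ∈ J → s ≤ t → ∀ f : Y₁,
      IntegrableOn (fun u => Γ s u (A u f)) (Set.Icc s t))
    (s t : ℝ) (hsJ : s ∈ J) (htJ : t ∈ J) (hst : s ≤ t)
    (hNormInt : IntegrableOn (fun u => ‖A u‖) (Set.Icc s t))
    (f : Y₁) (Af : ℝ → Y₁) (hAf : ∀ u ∈ J, ι (Af u) = A u f) :
    Γ s t (ι f) = ι f + (∫ u in s..t, A u f) +
      ∫ u in s..t, ∫ r in s..u, Γ s r (A r (Af u)) := by
  have hJst : Icc s t ⊆ J := by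
    rcases hJ with rfl | ⟨T, -, rfl⟩ <;> exact OrdConnected.out inferInstance hsJ htJ
  have ftc : ∀ b ∈ Icc s t, ∀ g : Y₁, ∫ r in s..b, Γ s r (A r g) = Γ s b (ι g) - ι g := by
    intro b hb g
    have hsb : Icc s b ⊆ J := (Icc_subset_Icc_right hb.2).trans hJst
    rw [integral_eq_sub_of_hasDerivWithinAt_Icc hb.1 (fun u hu => (htDeriv s u hsJ (hsb hu)
      hu.1 g).mono fun v hv => ⟨hsb hv, hv.1⟩) (hIntReg s b hsJ (hJst hb) hb.1 g), hId s hsJ]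
    rfl
  have hAmeas : AEStronglyMeasurable (fun u => A u f) (volume.restrict (Ioc s t)) := by
    refine aestronglyMeasurable_of_tendsto_slope_left (F := fun v u => Γ v u (ι f)) (ι f)
      (fun u hu v hv => ?_) (fun v hv u hu => ?_) (fun u hu => ?_)
    · exact (hsDeriv v u (hJst ⟨hv.1, hv.2.trans hu.2⟩) (hJst hu) hv.2 f).continuousWithinAt.mono
        fun w hw => ⟨hJst ⟨hw.1, hw.2.trans hu.2⟩, hw.2⟩
    · exact (htDeriv v u (hJst hv) (hJst ⟨hv.1.trans hu.1, hu.2⟩) hu.1 f).continuousWithinAt.mono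
        fun w hw => ⟨hJst ⟨hv.1.trans hw.1, hw.2⟩, hw.1⟩
    · refine (hGen u (hJst (Ioc_subset_Icc_self hu)) f).2.mono_left (nhdsWithin_le_of_mem ?_)
      filter_upwards [Ioo_mem_nhdsGT (sub_pos.2 hu.1)] with h ⟨h0, hh⟩
      exact ⟨h0, hJst ⟨by linarith, by linarith [hu.2]⟩⟩
  have hAint : IntervalIntegrable (fun u => A u f) volume s t :=
    (intervalIntegrable_iff_integrableOn_Ioc_of_le hst).2 <|
      ((hNormInt.mono_set Ioc_subset_Icc_self).mul_const ‖f‖).mono' hAmeas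
        (ae_of_all _ fun u => (A u).le_opNorm f)
  have hΓAint : IntervalIntegrable (fun u => Γ s u (A u f)) volume s t :=
    (intervalIntegrable_iff_integrableOn_Icc_of_le hst).2 (hIntReg s t hsJ htJ hst f)
  have hinner : ∀ u ∈ Ioc s t, ∫ r in s..u, Γ s r (A r (Af u)) = Γ s u (A u f) - A u f :=
    fun u hu => by rw [ftc u (Ioc_subset_Icc_self hu), hAf u (hJst (Ioc_subset_Icc_self hu))]
  calc Γ s t (ι f) = ι f + ∫ u in s..t, Γ s u (A u f) := by
        rw [ftc t (right_mem_Icc.2 hst)]; abel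
    _ = ι f + ((∫ u in s..t, A u f) + ∫ u in s..t, (Γ s u (A u f) - A u f)) := by
        rw [intervalIntegral.integral_sub hΓAint hAint]; abel
    _ = _ := by
        rw [← add_assoc, intervalIntegral.integral_congr_ae (ae_of_all _ fun u hu =>
          (hinner u (by rwa [uIoc_of_le hst] at hu)).symm)]

/-- Let `Γ` be a regular backward inhomogeneous `Y`-semigroup with generator
`A`, where each `A(u)` restricted to `Y₁` is a bounded operator `Y₁ → Y`
(so `A : ℝ → Y₁ →L[ℝ] Y`), let `(s,t) ∈ Δ_J`, and assume `u ↦ ‖A(u)‖_{B(Y₁,Y)}` is integrable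
on `[s,t]`.  Then for every `f ∈ D(A ∈ Y₁)`, i.e. `f ∈ Y₁` with `A(u)f ∈ Y₁` for all `u ∈ J`
(the `Y₁`-valued version being `Af` with `ι (Af u) = A u f`), one has
`Γ(s,t)f = f + ∫_s^t A(u)f du + ∫_s^t ∫_s^u Γ(s,r)A(r)A(u)f dr du`. -/
theorem stmt_5
    {Y : Type*} [NormedAddCommGroup Y] [NormedSpace ℝ Y] [CompleteSpace Y]
    [TopologicalSpace.SeparableSpace Y]
    {Y₁ : Type*} [NormedAddCommGroup Y₁] [NormedSpace ℝ Y₁] [CompleteSpace Y₁]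
    [TopologicalSpace.SeparableSpace Y₁]
    (ι : Y₁ →L[ℝ] Y) (hι : Function.Injective ι)
    (J : Set ℝ) (hJ : J = Set.Ici (0 : ℝ) ∨ ∃ T : ℝ, 0 < T ∧ J = Set.Icc 0 T)
    (Γ : ℝ → ℝ → Y →L[ℝ] Y)
    (hId : ∀ t ∈ J, Γ t t = ContinuousLinearMap.id ℝ Y)
    (hSemi : ∀ s r t : ℝ, s ∈ J → r ∈ J → t ∈ J → s ≤ r → r ≤ t →
      ∀ f : Y, Γ s r (Γ r t f) = Γ s t f)
    (A : ℝ → Y₁ →L[ℝ] Y)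
    (hGen : ∀ t ∈ J, ∀ f : Y₁,
      Tendsto (fun h : ℝ => h⁻¹ • (Γ t (t + h) (ι f) - ι f))
        (𝓝[{h : ℝ | 0 < h ∧ t + h ∈ J}] 0) (𝓝 (A t f)) ∧
      Tendsto (fun h : ℝ => h⁻¹ • (Γ (t - h) t (ι f) - ι f))
        (𝓝[{h : ℝ | 0 < h ∧ t - h ∈ J}] 0) (𝓝 (A t f)))
    (Γ₁ : ℝ → ℝ → Y₁ → Y₁)
    (hΓ₁ : ∀ s t : ℝ, s ∈ J → t ∈ J → s ≤ t → ∀ f : Y₁, ι (Γ₁ s t f) = Γ s t (ι f))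
    (hsDeriv : ∀ s t : ℝ, s ∈ J → t ∈ J → s ≤ t → ∀ f : Y₁,
      HasDerivWithinAt (fun u => Γ u t (ι f)) (-(A s (Γ₁ s t f))) {u ∈ J | u ≤ t} s)
    (htDeriv : ∀ s t : ℝ, s ∈ J → t ∈ J → s ≤ t → ∀ f : Y₁,
      HasDerivWithinAt (fun u => Γ s u (ι f)) (Γ s t (A t f)) {u ∈ J | s ≤ u} t)
    (hIntReg : ∀ s t : ℝ, s ∈ J → t ∈ J → s ≤ t → ∀ f : Y₁,
      IntegrableOn (fun u => Γ s u (A u f)) (Set.Icc s t))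
    (s t : ℝ) (hsJ : s ∈ J) (htJ : t ∈ J) (hst : s ≤ t)
    (hNormInt : IntegrableOn (fun u => ‖A u‖) (Set.Icc s t))
    (f : Y₁) (Af : ℝ → Y₁) (hAf : ∀ u ∈ J, ι (Af u) = A u f) :
    Γ s t (ι f) = ι f + (∫ u in s..t, A u f) +
      ∫ u in s..t, ∫ r in s..u, Γ s r (A r (Af u)) :=
  stmt_5_general ι J hJ Γ hId A hGen Γ₁ hsDeriv htDeriv hIntReg s t hsJ htJ hst hNormInt f Af hAf
end

section
/- In the setting of the pathwise random-evolution construction: let s ≥ 0, (T_n)_{n∈ℕ} strictly increasing with T_0 = s and T_n → ∞, Γ_n backward inhomogeneous Y-semigroups on [s,∞) each regular with generator A_n (so that Y₁ ⊆ D(A_n), Γ_n preserves Y₁, ∂/∂t Γ_n(s',t)f = Γ_n(s',t)A_n(t)f for f ∈ Y₁, and u ↦ Γ_n(s',u)A_n(u)f is Bochner integrable on compacts), and D_n ∈ B(Y) for n ≥ 1. With N(t) = max{n : T_n ≤ t} and V(t) = [∏_{k=1}^{N(t)} Γ_{k−1}(T_{k−1}, T_k) D_k] ∘ Γ_{N(t)}(T_{N(t)},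 t), one has for every f ∈ Y₁ and every t ≥ s: V(t)f = f + ∫_s^t V(u) A_{N(u)}(u) f du + ∑_{k=1}^{N(t)} V(T_k⁻)(D_k − I)f, where V(T_k⁻)f denotes the left limit lim_{u↑T_k} V(u)f and the integral is a Bochner integral in Y. -/
/-!
On `[T n, T (n+1))` the evolution is `V u = P n ∘ Γ n (T n) u`, so there `V u f` is differentiable
from the right with derivative `V u (A n u f)`, and the fundamental theorem of calculus gives its
increment over each piece. At `T (k+1)` the value jumps from the left limit
`P k (Γ k (T k) (T (k+1)) f)` to `P (k+1) f = P k (Γ k (T k) (T (k+1)) (D (k+1) f))`. Summing the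
increments over the pieces and the jumps telescopes to `V t f - f`.
-/

open Filter Topology Set MeasureTheory

theorem StrictMono.eq_of_mem_Ico_succ {α : Type*} [Preorder α] {T : ℕ → α} (hT : StrictMono T)
    {m n : ℕ} {u : α} (hm : u ∈ Ico (T m) (T (m + 1))) (hn : u ∈ Ico (T n) (T (n + 1))) :
    m = n := by
  have := hT.lt_iff_lt.mp (hm.1.trans_lt hn.2)
  have := hT.lt_iff_lt.mp (hn.1.trans_lt hm.2)
  omega

theorem Finset.sum_Icc_one_eq_sum_range {M : Type*} [AddCommMonoid M] (g : ℕ → M) (n : ℕ) :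
    ∑ k ∈ Finset.Icc 1 n, g k = ∑ k ∈ Finset.range n, g (k + 1) := by
  rw [Finset.range_eq_Ico, Finset.sum_Ico_add', zero_add, Finset.Ico_add_one_right_eq_Icc]

theorem tendsto_nhdsLT_of_eqOn_Ico {α β : Type*} [TopologicalSpace α] [LinearOrder α]
    [OrderTopology α] [TopologicalSpace β] {F φ : α → β} {a b : α} (hab : a < b)
    (hφ : ContinuousWithinAt φ (Icc a b) b) (hF : EqOn F φ (Ico a b)) :
    Tendsto F (𝓝[<] b) (𝓝 (φ b)) := by
  rw [ContinuousWithinAt, nhdsWithin_Icc_eq_nhdsLE hab] at hφ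
  exact (hφ.mono_left (nhdsWithin_mono _ Iio_subset_Iic_self)).congr'
    (eventually_of_mem (Ico_mem_nhdsLT hab) fun u hu => (hF hu).symm)

namespace PiecewiseFTC

variable {E : Type*} [NormedAddCommGroup E] {T : ℕ → ℝ} {N : ℝ → ℕ}
  {φ φ' : ℕ → ℝ → E}

theorem index_eq_of_mem_Ico (hT : StrictMono T)
    (hN : ∀ u, T 0 ≤ u → u ∈ Ico (T (N u)) (T (N u + 1))) {n : ℕ} {u : ℝ}
    (hu : u ∈ Ico (T n) (T (n + 1))) : N u = n :=
  hT.eq_of_mem_Ico_succ (hN u ((hT.monotone n.zero_le).trans hu.1)) hu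

theorem intervalIntegrable_piece (hT : StrictMono T)
    (hN : ∀ u, T 0 ≤ u → u ∈ Ico (T (N u)) (T (N u + 1)))
    (hint : ∀ n, IntegrableOn (φ' n) (Icc (T n) (T (n + 1)))) {n : ℕ} {b : ℝ}
    (hnb : T n ≤ b) (hb : b ≤ T (n + 1)) :
    IntervalIntegrable (fun u => φ' (N u) u) volume (T n) b := by
  rw [intervalIntegrable_iff_integrableOn_Icc_of_le hnb, integrableOn_Icc_iff_integrableOn_Ico]
  refine ((hint n).mono_set (Ico_subset_Icc_self.trans (Icc_subset_Icc_right hb))).congr_fun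
    (fun u hu => ?_) measurableSet_Ico
  rw [index_eq_of_mem_Ico hT hN ⟨hu.1, hu.2.trans_le hb⟩]

theorem integral_piece [NormedSpace ℝ E] [CompleteSpace E] (hT : StrictMono T)
    (hN : ∀ u, T 0 ≤ u → u ∈ Ico (T (N u)) (T (N u + 1)))
    (hφ : ∀ n, ContinuousOn (φ n) (Icc (T n) (T (n + 1))))
    (hφ' : ∀ n, ∀ x ∈ Ioo (T n) (T (n + 1)), HasDerivWithinAt (φ n) (φ' n x) (Ioi x) x)
    (hint : ∀ n, IntegrableOn (φ' n) (Icc (T n) (T (n + 1)))) {n : ℕ} {b : ℝ}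
    (hnb : T n ≤ b) (hb : b ≤ T (n + 1)) :
    ∫ u in T n..b, φ' (N u) u = φ n b - φ n (T n) := by
  refine intervalIntegral.integral_eq_sub_of_hasDeriv_right_of_le hnb
    ((hφ n).mono (Icc_subset_Icc_right hb)) (fun x hx => ?_)
    (intervalIntegrable_piece hT hN hint hnb hb)
  rw [index_eq_of_mem_Ico hT hN ⟨hx.1.le, hx.2.trans_le hb⟩]
  exact hφ' n x ⟨hx.1, hx.2.trans_le hb⟩

theorem sum_increments_add_sum_jumps {G : Type*} [AddCommGroup G] (φ : ℕ → ℝ → G) (n : ℕ) :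
    ∑ k ∈ Finset.range n, (φ k (T (k + 1)) - φ k (T k)) +
      ∑ k ∈ Finset.range n, (φ (k + 1) (T (k + 1)) - φ k (T (k + 1))) =
      φ n (T n) - φ 0 (T 0) := by
  rw [← Finset.sum_add_distrib, ← Finset.sum_range_sub (fun k => φ k (T k))]
  exact Finset.sum_congr rfl fun k _ => by abel

theorem integral_add_sum_jumps [NormedSpace ℝ E] [CompleteSpace E] (hT : StrictMono T)
    (hN : ∀ u, T 0 ≤ u → u ∈ Ico (T (N u)) (T (N u + 1)))
    (hφ : ∀ n, ContinuousOn (φ n) (Icc (T n) (T (n + 1))))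
    (hφ' : ∀ n, ∀ x ∈ Ioo (T n) (T (n + 1)), HasDerivWithinAt (φ n) (φ' n x) (Ioi x) x)
    (hint : ∀ n, IntegrableOn (φ' n) (Icc (T n) (T (n + 1)))) {t : ℝ} (ht : T 0 ≤ t) :
    IntegrableOn (fun u => φ' (N u) u) (Icc (T 0) t) ∧
      φ (N t) t = φ 0 (T 0) + (∫ u in T 0..t, φ' (N u) u) +
        ∑ k ∈ Finset.range (N t), (φ (k + 1) (T (k + 1)) - φ k (T (k + 1))) := by
  obtain ⟨hNt, htN⟩ := hN t ht
  have hfull : ∀ k < N t, IntervalIntegrable (fun u => φ' (N u) u) volume (T k) (T (k + 1)) :=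
    fun k _ => intervalIntegrable_piece hT hN hint (hT k.lt_add_one).le le_rfl
  have hlast := intervalIntegrable_piece hT hN hint hNt htN.le
  refine ⟨(intervalIntegrable_iff_integrableOn_Icc_of_le ht).mp
    ((IntervalIntegrable.trans_iterate hfull).trans hlast), ?_⟩
  rw [← intervalIntegral.integral_add_adjacent_intervals (.trans_iterate hfull) hlast,
    ← intervalIntegral.sum_integral_adjacent_intervals hfull,
    integral_piece hT hN hφ hφ' hint hNt htN.le,
    Finset.sum_congr rfl fun k _ => integral_piece hT hN hφ hφ' hint (hT k.lt_add_one).le le_rfl]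
  have htelescope := sum_increments_add_sum_jumps φ (N t) (T := T)
  linear_combination (norm := module) -htelescope

theorem tendsto_comp_nhdsLT {Y : Type*} [NormedAddCommGroup Y] [NormedSpace ℝ Y]
    (hT : StrictMono T) (hN : ∀ u, T 0 ≤ u → u ∈ Ico (T (N u)) (T (N u + 1)))
    {Γ : ℕ → ℝ → ℝ → Y →L[ℝ] Y} {P : ℕ → Y →L[ℝ] Y} {V : ℝ → Y →L[ℝ] Y}
    (hV : ∀ u, T 0 ≤ u → V u = (P (N u)).comp (Γ (N u) (T (N u)) u)) (k : ℕ) {g : Y}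
    (hΓ : ContinuousOn (fun u => Γ k (T k) u g) (Ici (T k))) :
    Tendsto (fun u => V u g) (𝓝[<] T (k + 1)) (𝓝 (P k (Γ k (T k) (T (k + 1)) g))) := by
  have hk := hT k.lt_add_one
  refine tendsto_nhdsLT_of_eqOn_Ico (φ := fun u => P k (Γ k (T k) u g)) hk
    ((P k).continuous.comp_continuousOn (hΓ.mono Icc_subset_Ici_self) _ (right_mem_Icc.mpr hk.le))
    fun u hu => ?_
  rw [hV u ((hT.monotone k.zero_le).trans hu.1), index_eq_of_mem_Ico hT hN hu]
  rfl

end PiecewiseFTC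

theorem stmt_9_general
    {Y : Type*} [NormedAddCommGroup Y] [NormedSpace ℝ Y] [CompleteSpace Y]
    {Y₁ : Type*} [NormedAddCommGroup Y₁] [NormedSpace ℝ Y₁]
    (ι : Y₁ →L[ℝ] Y)
    (s : ℝ)
    (T : ℕ → ℝ) (hT0 : T 0 = s) (hTmono : StrictMono T)
    (Γ : ℕ → ℝ → ℝ → Y →L[ℝ] Y)
    (hId : ∀ n : ℕ, ∀ t : ℝ, s ≤ t → Γ n t t = ContinuousLinearMap.id ℝ Y)
    (hCont : ∀ (n : ℕ) (s' : ℝ), s ≤ s' → ∀ f : Y,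
      ContinuousOn (fun u => Γ n s' u f) (Set.Ici s'))
    (A : ℕ → ℝ → Y₁ → Y)
    (htDeriv : ∀ (n : ℕ) (s' t : ℝ), s ≤ s' → s' ≤ t → ∀ f : Y₁,
      HasDerivWithinAt (fun u => Γ n s' u (ι f)) (Γ n s' t (A n t f)) (Set.Ici s') t)
    (hIntReg : ∀ (n : ℕ) (s' t : ℝ), s ≤ s' → s' ≤ t → ∀ f : Y₁,
      IntegrableOn (fun u => Γ n s' u (A n u f)) (Set.Icc s' t))
    (D : ℕ → Y →L[ℝ] Y)
    (N : ℝ → ℕ) (hN : ∀ t : ℝ, s ≤ t → T (N t) ≤ t ∧ t < T (N t + 1))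
    (P : ℕ → Y →L[ℝ] Y)
    (hP0 : P 0 = ContinuousLinearMap.id ℝ Y)
    (hPsucc : ∀ n : ℕ, P (n + 1) = (P n).comp ((Γ n (T n) (T (n + 1))).comp (D (n + 1))))
    (V : ℝ → Y →L[ℝ] Y)
    (hV : ∀ t : ℝ, s ≤ t → V t = (P (N t)).comp (Γ (N t) (T (N t)) t))
    (L : ℕ → Y → Y)
    (hL : ∀ k : ℕ, 1 ≤ k → ∀ g : Y, Tendsto (fun u => V u g) (𝓝[<] (T k)) (𝓝 (L k g))) :
    ∀ f : Y₁, ∀ t : ℝ, s ≤ t →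
      IntegrableOn (fun u => V u (A (N u) u f)) (Set.Icc s t) ∧
      V t (ι f) = ι f + (∫ u in s..t, V u (A (N u) u f)) +
        ∑ k ∈ Finset.Icc 1 (N t), L k (D k (ι f) - ι f) := by
  intro f t ht
  subst hT0
  have hTn (n : ℕ) : T 0 ≤ T n := hTmono.monotone n.zero_le
  have hV_apply {u : ℝ} (hu : T 0 ≤ u) (g : Y) :
      V u g = P (N u) (Γ (N u) (T (N u)) u g) := by
    rw [hV u hu]; rfl
  obtain ⟨hint, heq⟩ := PiecewiseFTC.integral_add_sum_jumps hTmono hN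
    (φ := fun n u => P n (Γ n (T n) u (ι f))) (φ' := fun n u => P n (Γ n (T n) u (A n u f)))
    (fun n => (P n).continuous.comp_continuousOn ((hCont n (T n) (hTn n) _).mono
      Icc_subset_Ici_self))
    (fun n x hx => (P n).hasFDerivAt.comp_hasDerivWithinAt x
      ((htDeriv n (T n) x (hTn n) hx.1.le f).mono (Ioi_subset_Ici hx.1.le)))
    (fun n => (P n).integrable_comp (hIntReg n _ _ (hTn n) (hTmono n.lt_add_one).le f)) ht
  have hintegrand : EqOn (fun u => V u (A (N u) u f))
      (fun u => P (N u) (Γ (N u) (T (N u)) u (A (N u) u f))) (Icc (T 0) t) :=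
    fun u hu => hV_apply hu.1 _
  have hjump (k : ℕ) : P (k + 1) (Γ (k + 1) (T (k + 1)) (T (k + 1)) (ι f)) -
      P k (Γ k (T k) (T (k + 1)) (ι f)) = L (k + 1) (D (k + 1) (ι f) - ι f) := by
    rw [tendsto_nhds_unique (hL (k + 1) (Nat.le_add_left 1 k) _)
      (PiecewiseFTC.tendsto_comp_nhdsLT hTmono hN hV k (hCont k (T k) (hTn k) _)),
      hId _ _ (hTn _), hPsucc, map_sub, map_sub]
    rfl
  refine ⟨hint.congr_fun hintegrand.symm measurableSet_Icc, ?_⟩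
  rw [hV_apply ht, heq, Finset.sum_Icc_one_eq_sum_range, Finset.sum_congr rfl fun k _ => hjump k,
    intervalIntegral.integral_congr (hintegrand.mono (uIcc_of_le ht).subset), hId 0 _ le_rfl, hP0]
  rfl

/-- Pathwise integral representation of an inhomogeneous random evolution.
In the setting of the pathwise construction (`T`, `Γ n`, `D n`, `N`, `P`, `V` as in the RCLL
proposition), with each `Γ n` regular with generator `A n` (so `Y₁ ⊆ D(A n)` via `hGen`,
`Γ n` preserves `Y₁` via `Γ₁`, `∂/∂t Γ_n(s',t)f = Γ_n(s',t) A_n(t) f` for `f ∈ Y₁`, and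
`u ↦ Γ_n(s',u)A_n(u)f` is Bochner integrable on compacts), and `L k g` denoting the left limit
`V(T_k⁻)g`, one has for every `f ∈ Y₁` and `t ≥ s`:
`V(t)f = f + ∫_s^t V(u) A_{N(u)}(u) f du + ∑_{k=1}^{N(t)} V(T_k⁻)(D_k − I)f`. -/
theorem stmt_9
    {Y : Type*} [NormedAddCommGroup Y] [NormedSpace ℝ Y] [CompleteSpace Y]
    [TopologicalSpace.SeparableSpace Y]
    {Y₁ : Type*} [NormedAddCommGroup Y₁] [NormedSpace ℝ Y₁] [CompleteSpace Y₁]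
    [TopologicalSpace.SeparableSpace Y₁]
    (ι : Y₁ →L[ℝ] Y) (hι : Function.Injective ι)
    (s : ℝ) (hs : 0 ≤ s)
    (T : ℕ → ℝ) (hT0 : T 0 = s) (hTmono : StrictMono T)
    (hTtop : Tendsto T atTop atTop)
    (Γ : ℕ → ℝ → ℝ → Y →L[ℝ] Y)
    (hId : ∀ n : ℕ, ∀ t : ℝ, s ≤ t → Γ n t t = ContinuousLinearMap.id ℝ Y)
    (hSemi : ∀ (n : ℕ) (r u t : ℝ), s ≤ r → r ≤ u → u ≤ t →
      ∀ f : Y, Γ n r u (Γ n u t f) = Γ n r t f)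
    (hCont : ∀ (n : ℕ) (s' : ℝ), s ≤ s' → ∀ f : Y,
      ContinuousOn (fun u => Γ n s' u f) (Set.Ici s'))
    (A : ℕ → ℝ → Y₁ → Y)
    (hGen : ∀ (n : ℕ) (t : ℝ), s ≤ t → ∀ f : Y₁,
      Tendsto (fun h : ℝ => h⁻¹ • (Γ n t (t + h) (ι f) - ι f))
        (𝓝[{h : ℝ | 0 < h}] 0) (𝓝 (A n t f)) ∧
      Tendsto (fun h : ℝ => h⁻¹ • (Γ n (t - h) t (ι f) - ι f))
        (𝓝[{h : ℝ | 0 < h ∧ s ≤ t - h}] 0) (𝓝 (A n t f)))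
    (Γ₁ : ℕ → ℝ → ℝ → Y₁ → Y₁)
    (hΓ₁ : ∀ (n : ℕ) (r t : ℝ), s ≤ r → r ≤ t → ∀ f : Y₁,
      ι (Γ₁ n r t f) = Γ n r t (ι f))
    (htDeriv : ∀ (n : ℕ) (s' t : ℝ), s ≤ s' → s' ≤ t → ∀ f : Y₁,
      HasDerivWithinAt (fun u => Γ n s' u (ι f)) (Γ n s' t (A n t f)) (Set.Ici s') t)
    (hIntReg : ∀ (n : ℕ) (s' t : ℝ), s ≤ s' → s' ≤ t → ∀ f : Y₁,
      IntegrableOn (fun u => Γ n s' u (A n u f)) (Set.Icc s' t))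
    (D : ℕ → Y →L[ℝ] Y)
    (N : ℝ → ℕ) (hN : ∀ t : ℝ, s ≤ t → T (N t) ≤ t ∧ t < T (N t + 1))
    (P : ℕ → Y →L[ℝ] Y)
    (hP0 : P 0 = ContinuousLinearMap.id ℝ Y)
    (hPsucc : ∀ n : ℕ, P (n + 1) = (P n).comp ((Γ n (T n) (T (n + 1))).comp (D (n + 1))))
    (V : ℝ → Y →L[ℝ] Y)
    (hV : ∀ t : ℝ, s ≤ t → V t = (P (N t)).comp (Γ (N t) (T (N t)) t))
    (L : ℕ → Y → Y)
    (hL : ∀ k : ℕ, 1 ≤ k → ∀ g : Y, Tendsto (fun u => V u g) (𝓝[<] (T k)) (𝓝 (L k g))) :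
    ∀ f : Y₁, ∀ t : ℝ, s ≤ t →
      IntegrableOn (fun u => V u (A (N u) u f)) (Set.Icc s t) ∧
      V t (ι f) = ι f + (∫ u in s..t, V u (A (N u) u f)) +
        ∑ k ∈ Finset.Icc 1 (N t), L k (D k (ι f) - ι f) :=
  stmt_9_general ι s T hT0 hTmono Γ hId hCont A htDeriv hIntReg D N hN P hP0 hPsucc V hV L hL
end

section
/- Let M > 0 and let g : [0,∞) → [0,∞) be a nondecreasing function with g(u)/u → 1/M as u → ∞. Then for every 0 ≤ s, every η > 0 and every T ≥ s + η: sup_{t∈[s+η,T]} | ε · ( g((t + η − s)/ε) − g((t − s)/ε) ) − η/M | → 0 as ε ↓ 0. -/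
open Filter Topology Set

/-!
Writing `ε g(x/ε) - L x = x (g(x/ε)/(x/ε) - L)`, the rescaled function `ε g(x/ε)` converges to
`L x` uniformly on every compact interval `[a, b]` with `a > 0`, since there `x/ε ≥ a/ε → ∞`.
A window increment is the difference of two such values with `x = t + η - s` and `x = t - s`,
both in `[η, T - s + η]`, so it converges uniformly to `L η`.
-/

theorem tendstoUniformlyOn_mul_comp_div_of_tendsto_div_atTop {g : ℝ → ℝ} {L : ℝ}
    (hlim : Tendsto (fun u => g u / u) atTop (𝓝 L)) {a : ℝ} (b : ℝ) (ha : 0 < a) :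
    TendstoUniformlyOn (fun ε x => ε * g (x / ε)) (fun x => L * x) (𝓝[>] 0) (Icc a b) := by
  rw [Metric.tendstoUniformlyOn_iff]
  intro δ hδ
  set C := |b| + 1
  have hC : 0 < C := by positivity
  obtain ⟨U, hU⟩ := eventually_atTop.1 (Metric.tendsto_nhds.1 hlim (δ / C) (by positivity))
  have hlarge : ∀ᶠ ε in 𝓝[>] (0 : ℝ), U ≤ a / ε := by
    simpa only [div_eq_mul_inv] using
      (tendsto_inv_nhdsGT_zero.const_mul_atTop ha).eventually_ge_atTop U
  filter_upwards [hlarge, self_mem_nhdsWithin] with ε hεU (hε : 0 < ε) x ⟨hax, hxb⟩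
  have hx : 0 < x := ha.trans_le hax
  have herr : |g (x / ε) / (x / ε) - L| < δ / C := by
    simpa only [Real.dist_eq] using hU (x / ε) (hεU.trans (by gcongr))
  calc dist (L * x) (ε * g (x / ε)) = x * |g (x / ε) / (x / ε) - L| := by
        have hfactor : ε * g (x / ε) - L * x = x * (g (x / ε) / (x / ε) - L) := by field_simp
        rw [Real.dist_eq, abs_sub_comm, hfactor, abs_mul, abs_of_pos hx]
    _ ≤ C * |g (x / ε) / (x / ε) - L| := by
        gcongr
        linarith [le_abs_self b]
    _ < C * (δ / C) := by gcongr
    _ = δ := by field_simp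

theorem stmt_19_general (M : ℝ)
    (g : ℝ → ℝ)
    (hlim : Tendsto (fun u => g u / u) atTop (𝓝 (1 / M))) :
    ∀ s η T : ℝ, 0 ≤ s → 0 < η → s + η ≤ T →
      ∀ δ : ℝ, 0 < δ → ∀ᶠ ε in 𝓝[>] (0 : ℝ),
        ∀ t ∈ Set.Icc (s + η) T,
          |ε * (g ((t + η - s) / ε) - g ((t - s) / ε)) - η / M| < δ := by
  intro s η T _ hη _ δ hδ
  have hunif := tendstoUniformlyOn_mul_comp_div_of_tendsto_div_atTop hlim (T - s + η) hη
  have hupper : Icc (s + η) T ⊆ (fun t => t + η - s) ⁻¹' Icc η (T - s + η) :=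
    fun t ⟨h₁, h₂⟩ => ⟨by linarith, by linarith⟩
  have hlower : Icc (s + η) T ⊆ (fun t => t - s) ⁻¹' Icc η (T - s + η) :=
    fun t ⟨h₁, h₂⟩ => ⟨by linarith, by linarith⟩
  have hwindow := ((hunif.comp _).mono hupper).sub ((hunif.comp _).mono hlower)
  filter_upwards [Metric.tendstoUniformlyOn_iff.1 hwindow δ hδ] with ε hε t ht
  convert hε t ht using 1
  rw [Real.dist_eq, abs_sub_comm]
  congr 1
  simp only [Pi.sub_apply, Function.comp_apply]
  ring

/-- If `g : [0,∞) → [0,∞)` is nondecreasing with `g(u)/u → 1/M` as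
`u → ∞` (`M > 0`), then for `η > 0` the sliding-window increments satisfy
`sup_{t∈[s+η,T]} |ε (g((t+η−s)/ε) − g((t−s)/ε)) − η/M| → 0` as `ε ↓ 0` (stated in ε-form). -/
theorem stmt_19 (M : ℝ) (hM : 0 < M)
    (g : ℝ → ℝ)
    (hg0 : ∀ u : ℝ, 0 ≤ u → 0 ≤ g u)
    (hmono : ∀ u v : ℝ, 0 ≤ u → u ≤ v → g u ≤ g v)
    (hlim : Tendsto (fun u => g u / u) atTop (𝓝 (1 / M))) :
    ∀ s η T : ℝ, 0 ≤ s → 0 < η → s + η ≤ T →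
      ∀ δ : ℝ, 0 < δ → ∀ᶠ ε in 𝓝[>] (0 : ℝ),
        ∀ t ∈ Set.Icc (s + η) T,
          |ε * (g ((t + η - s) / ε) - g ((t - s) / ε)) - η / M| < δ :=
  stmt_19_general M g hlim
end
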